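/- arXiv:1409.7007 — 2 statements merged into one kernel-verified Lean document; each statement's English description precedes it below -/
import Mathlib

section
/- Let R be a Noetherian local ring, let C• be a bounded cochain complex of finite free R-modules concentrated in degrees [a, b], and let x = (x_1, …, x_n) be an R-regular sequence. Suppose that H^i(C• ⊗_R R/(x)) = 0 for all i ≠ b. Then H^i(C•) = 0 for all i ≠ b, and the canonical map H^b(C•) ⊗_R R/(x) → H^b(C• ⊗_R R/(x)) is an isomorphism. Moreover, if H^b(C• ⊗_R R/(x)) ≠ 0, then x is an H^b(C•)-regular sequence. -/
/-!
Induction on the length of the sequence `x₁ :: xs`. Since `x₁` is regular on every term of `C`,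
`0 → C --x₁--> C → C/x₁C → 0` is a short exact sequence of complexes, and
`(C/x₁C)/(xs) ≅ C/(x₁ :: xs)`, so the inductive hypothesis applies to `C/x₁C`. In the long exact
homology sequence, `H^i(C/x₁C) = 0` makes `x₁` surjective on the finite module `H^i(C)`, which then
vanishes by Nakayama; `H^{b+1}(C) = 0` makes `H^b(C) → H^b(C/x₁C)` surjective with kernel
`x₁ H^b(C)`; and `H^{b-1}(C/x₁C) = 0` makes `x₁` injective on `H^b(C)`.
-/

open CategoryTheory

section QuotientMachinery

variable (R : Type) [CommRing R]

/-- The functor `M ↦ M/IM` on `R`-modules (i.e. `- ⊗_R R/I`). -/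
noncomputable def qMod (I : Ideal R) : ModuleCat R ⥤ ModuleCat R where
  obj M := ModuleCat.of R (M ⧸ (I • (⊤ : Submodule R M)))
  map {M N} f := ModuleCat.ofHom
    (Submodule.mapQ _ _ f.hom (Submodule.smul_top_le_comap_smul_top I f.hom))
  map_id M := by
    ext x
    first
    | rfl
    | (obtain ⟨y, rfl⟩ := Submodule.Quotient.mk_surjective (I • (⊤ : Submodule R M)) x; rfl)
  map_comp {M N P} f g := by
    ext x
    first
    | rfl
    | (obtain ⟨y, rfl⟩ := Submodule.Quotient.mk_surjective (I • (⊤ : Submodule R M)) x; rfl)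

instance (I : Ideal R) : (qMod R I).Additive := by
  constructor
  intro M N f g
  ext x
  obtain ⟨y, rfl⟩ := Submodule.Quotient.mk_surjective (I • (⊤ : Submodule R M)) x
  rfl

/-- Reduction of a cochain complex of `R`-modules modulo an ideal `I`,
i.e. the complex `C ⊗_R R/I`. -/
noncomputable def qCx (I : Ideal R) :
    CochainComplex (ModuleCat R) ℤ ⥤ CochainComplex (ModuleCat R) ℤ :=
  (qMod R I).mapHomologicalComplex _

/-- The natural reduction map `M ⟶ M/IM`. -/
noncomputable def qPi (I : Ideal R) : 𝟭 (ModuleCat R) ⟶ qMod R I where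
  app M := ModuleCat.ofHom (Submodule.mkQ _ : M →ₗ[R] _)
  naturality M N f := by
    ext x
    rfl

/-- The natural reduction chain map `C ⟶ C ⊗_R R/I`. -/
noncomputable def qRed (I : Ideal R) (C : CochainComplex (ModuleCat R) ℤ) :
    C ⟶ (qCx R I).obj C :=
  (NatTrans.mapHomologicalComplex (qPi R I) (ComplexShape.up ℤ)).app C

end QuotientMachinery

open Limits HomologicalComplex RingTheory.Sequence IsLocalRing

lemma HomologicalComplex.homologyMap_smul {R C ι : Type*} [Semiring R] [Category C] [Preadditive C]
    [Linear R C] {c : ComplexShape ι} {K L : HomologicalComplex C c} (x : R) (f : K ⟶ L) (i : ι)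
    [K.HasHomology i] [L.HasHomology i] :
    homologyMap (x • f) i = x • homologyMap f i :=
  ShortComplex.homologyMap_smul ((shortComplexFunctor C c i).map f) x

section Reduction

variable {R : Type} [CommRing R]

lemma ModuleCat.range_smul_id (M : ModuleCat R) (x : R) :
    LinearMap.range (x • 𝟙 M).hom = Ideal.span {x} • ⊤ := by
  rw [Submodule.ideal_span_singleton_smul, ← Submodule.map_top]
  rfl

instance (I : Ideal R) (C : CochainComplex (ModuleCat R) ℤ) (n : ℤ) [Module.Finite R (C.X n)] :
    Module.Finite R (((qCx R I).obj C).X n) :=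
  Module.Finite.quotient R (I • ⊤ : Submodule R (C.X n))

lemma HomologicalComplex.finite_homology [IsNoetherianRing R] {ι : Type*} {c : ComplexShape ι}
    (C : HomologicalComplex (ModuleCat R) c) [∀ n, Module.Finite R (C.X n)] (i : ι) :
    Module.Finite R (C.homology i) := by
  have : IsNoetherian R (C.sc i).X₂ := isNoetherian_of_isNoetherianRing_of_finite R (C.X i)
  have : Module.Finite R (C.sc i).moduleCatLeftHomologyData.H := Module.Finite.quotient R _
  exact Module.Finite.equiv (C.sc i).moduleCatHomologyIso.toLinearEquiv.symm

instance (C : CochainComplex (ModuleCat R) ℤ) : IsIso (qRed R ⊥ C) := by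
  have (n : ℤ) : IsIso ((qRed R ⊥ C).f n) := by
    rw [ConcreteCategory.isIso_iff_bijective]
    refine ⟨?_, Submodule.mkQ_surjective _⟩
    rw [← LinearMap.ker_eq_bot]
    exact (Submodule.ker_mkQ _).trans (Submodule.bot_smul _)
  exact Hom.isIso_of_components _

noncomputable abbrev reductionShortComplex (x : R) (C : CochainComplex (ModuleCat R) ℤ) :
    ShortComplex (CochainComplex (ModuleCat R) ℤ) :=
  ShortComplex.mk (x • 𝟙 C) (qRed R (Ideal.span {x}) C) (by
    ext n m
    exact (Submodule.Quotient.mk_eq_zero _).mpr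
      (Submodule.smul_mem_smul (Ideal.mem_span_singleton_self x) trivial))

lemma reductionShortComplex_shortExact {x : R} {C : CochainComplex (ModuleCat R) ℤ}
    (hx : ∀ n, IsSMulRegular (C.X n) x) : (reductionShortComplex x C).ShortExact := by
  rw [shortExact_iff_degreewise_shortExact]
  intro n
  refine
    { exact := (ShortComplex.moduleCat_exact_iff_range_eq_ker _).mpr ?_
      mono_f := (ModuleCat.mono_iff_injective _).mpr (hx n)
      epi_g := (ModuleCat.epi_iff_surjective _).mpr (Submodule.mkQ_surjective _) }
  exact (ModuleCat.range_smul_id _ x).trans (Submodule.ker_mkQ _).symm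

noncomputable def Submodule.quotQuotSpanEquivQuotOfListCons (x : R) (xs : List R) (M : Type*)
    [AddCommGroup M] [Module R M] :
    ((M ⧸ (Ideal.span {x} • ⊤ : Submodule R M)) ⧸
        (Ideal.ofList xs • ⊤ : Submodule R (M ⧸ (Ideal.span {x} • ⊤ : Submodule R M)))) ≃ₗ[R]
      (M ⧸ (Ideal.ofList (x :: xs) • ⊤ : Submodule R M)) :=
  (quotEquivOfEq _ _ (by rw [Ideal.ofList_cons, sup_smul, map_sup, mkQ_map_self, bot_sup_eq,
      map_smul'', map_top, range_mkQ])).trans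
    (quotientQuotientEquivQuotient _ _ (by rw [Ideal.ofList_cons, sup_smul]; exact le_sup_left))

noncomputable def qCxConsIso (x : R) (xs : List R) (C : CochainComplex (ModuleCat R) ℤ) :
    (qCx R (Ideal.ofList xs)).obj ((qCx R (Ideal.span {x})).obj C) ≅
      (qCx R (Ideal.ofList (x :: xs))).obj C :=
  Hom.isoOfComponents
    (fun n => (Submodule.quotQuotSpanEquivQuotOfListCons x xs (C.X n)).toModuleIso)
    (fun i j _ => by
      ext m
      induction m using Submodule.Quotient.induction_on with | _ m => ?_
      induction m using Submodule.Quotient.induction_on with | _ m => rfl)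

lemma qRed_cons (x : R) (xs : List R) (C : CochainComplex (ModuleCat R) ℤ) :
    qRed R (Ideal.ofList (x :: xs)) C =
      qRed R (Ideal.span {x}) C ≫
        qRed R (Ideal.ofList xs) ((qCx R (Ideal.span {x})).obj C) ≫ (qCxConsIso x xs C).hom := by
  ext n m
  rfl

lemma bijective_homologyMap_qCxConsIso_hom (x : R) (xs : List R)
    (C : CochainComplex (ModuleCat R) ℤ) (i : ℤ) :
    Function.Bijective (homologyMap (qCxConsIso x xs C).hom i) :=
  (ConcreteCategory.isIso_iff_bijective _).mp inferInstance

lemma CategoryTheory.Limits.IsZero.qCx_cons {x : R} {xs : List R}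
    {C : CochainComplex (ModuleCat R) ℤ} {n : ℤ}
    (h : IsZero (((qCx R (Ideal.ofList (x :: xs))).obj C).homology n)) :
    IsZero (((qCx R (Ideal.ofList xs)).obj ((qCx R (Ideal.span {x})).obj C)).homology n) :=
  h.of_iso ((homologyFunctor _ _ n).mapIso (qCxConsIso x xs C))

end Reduction

section OneElement

variable {R : Type} [CommRing R] {x : R} {C : CochainComplex (ModuleCat R) ℤ}
  (hx : ∀ n, IsSMulRegular (C.X n) x)

lemma homologyMap_reductionShortComplex_f (i : ℤ) :
    homologyMap (reductionShortComplex x C).f i = x • 𝟙 (C.homology i) := by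
  rw [homologyMap_smul, homologyMap_id]

include hx

lemma ker_homologyMap_qRed_span (i : ℤ) :
    LinearMap.ker (homologyMap (qRed R (Ideal.span {x}) C) i).hom =
      Ideal.span {x} • (⊤ : Submodule R (C.homology i)) := by
  have hex : LinearMap.range (homologyMap (reductionShortComplex x C).f i).hom =
      LinearMap.ker (homologyMap (qRed R (Ideal.span {x}) C) i).hom :=
    ((reductionShortComplex_shortExact hx).homology_exact₂ i).moduleCat_range_eq_ker
  rw [← hex, homologyMap_reductionShortComplex_f, ModuleCat.range_smul_id]

lemma surjective_homologyMap_qRed_span {i : ℤ} (hnext : IsZero (C.homology (i + 1))) :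
    Function.Surjective (homologyMap (qRed R (Ideal.span {x}) C) i) := by
  have hS := reductionShortComplex_shortExact hx
  have hex : LinearMap.range (homologyMap (qRed R (Ideal.span {x}) C) i).hom =
      LinearMap.ker (hS.δ i (i + 1) rfl).hom :=
    (hS.homology_exact₃ i (i + 1) rfl).moduleCat_range_eq_ker
  rw [hnext.eq_of_tgt (hS.δ i (i + 1) rfl) 0, ModuleCat.hom_zero, LinearMap.ker_zero,
    LinearMap.range_eq_top] at hex
  exact hex

lemma isSMulRegular_homology {i : ℤ}
    (hprev : IsZero (((qCx R (Ideal.span {x})).obj C).homology (i - 1))) :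
    IsSMulRegular (C.homology i) x := by
  have hS := reductionShortComplex_shortExact hx
  have hex : LinearMap.range (hS.δ (i - 1) i (by simp)).hom =
      LinearMap.ker (homologyMap (reductionShortComplex x C).f i).hom :=
    (hS.homology_exact₁ (i - 1) i (by simp)).moduleCat_range_eq_ker
  rw [hprev.eq_of_src (hS.δ (i - 1) i (by simp)) 0, ModuleCat.hom_zero, LinearMap.range_zero,
    homologyMap_reductionShortComplex_f] at hex
  exact LinearMap.ker_eq_bot.mp hex.symm

lemma isZero_homology_of_isZero_homology_qCx_span [IsLocalRing R] (hm : x ∈ maximalIdeal R)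
    {i : ℤ} [Module.Finite R (C.homology i)]
    (hi : IsZero (((qCx R (Ideal.span {x})).obj C).homology i)) : IsZero (C.homology i) := by
  have htop : (⊤ : Submodule R (C.homology i)) = Ideal.span {x} • ⊤ := by
    rw [← ker_homologyMap_qRed_span hx, hi.eq_of_tgt (homologyMap _ i) 0, ModuleCat.hom_zero,
      LinearMap.ker_zero]
  rw [ModuleCat.isZero_iff_subsingleton, ← not_nontrivial_iff_subsingleton]
  intro
  exact Submodule.top_ne_ideal_smul_of_le_jacobson_annihilator
    ((Ideal.span_singleton_le_iff_mem _).mpr (maximalIdeal_le_jacobson _ hm)) htop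

end OneElement

lemma RingTheory.Sequence.isWeaklyRegular_cons_iff_span {R M : Type*} [CommRing R]
    [AddCommGroup M] [Module R M] (x : R) (xs : List R) :
    IsWeaklyRegular M (x :: xs) ↔
      IsSMulRegular M x ∧ IsWeaklyRegular (M ⧸ (Ideal.span {x} • ⊤ : Submodule R M)) xs := by
  rw [isWeaklyRegular_cons_iff, (Submodule.quotEquivOfEq _ _
    (Submodule.ideal_span_singleton_smul x ⊤).symm).isWeaklyRegular_congr]

lemma RingTheory.Sequence.IsWeaklyRegular.of_flat_module {R M : Type*} [CommRing R]
    [AddCommGroup M] [Module R M] [Module.Flat R M] {rs : List R} (h : IsWeaklyRegular R rs) :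
    IsWeaklyRegular M rs :=
  ((TensorProduct.rid R M).isWeaklyRegular_congr rs).mp h.isWeaklyRegular_lTensor

lemma RingTheory.Sequence.IsRegular.mem_maximalIdeal {R : Type*} [CommRing R] [IsLocalRing R]
    {rs : List R} (h : IsRegular R rs) : ∀ r ∈ rs, r ∈ maximalIdeal R := fun _ hr =>
  le_maximalIdeal (J := Ideal.ofList rs)
    (fun htop => h.top_ne_smul (by rw [htop, Submodule.top_smul])) (Ideal.subset_span hr)

section Sequence

variable {R : Type} [CommRing R] [IsLocalRing R]

structure TermwiseRegular (rs : List R) (C : CochainComplex (ModuleCat R) ℤ) : Prop where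
  finite (n : ℤ) : Module.Finite R (C.X n)
  isWeaklyRegular (n : ℤ) : IsWeaklyRegular (C.X n) rs
  mem_maximalIdeal : ∀ r ∈ rs, r ∈ maximalIdeal R

namespace TermwiseRegular

variable {x : R} {xs : List R} {C : CochainComplex (ModuleCat R) ℤ}

lemma isSMulRegular (h : TermwiseRegular (x :: xs) C) (n : ℤ) : IsSMulRegular (C.X n) x :=
  ((isWeaklyRegular_cons_iff_span x xs).mp (h.isWeaklyRegular n)).1

lemma qCx_span (h : TermwiseRegular (x :: xs) C) :
    TermwiseRegular xs ((qCx R (Ideal.span {x})).obj C) where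
  finite n := have := h.finite n; inferInstance
  isWeaklyRegular n := ((isWeaklyRegular_cons_iff_span x xs).mp (h.isWeaklyRegular n)).2
  mem_maximalIdeal r hr := h.mem_maximalIdeal r (List.mem_cons_of_mem x hr)

end TermwiseRegular

variable [IsNoetherianRing R] {rs : List R} {C : CochainComplex (ModuleCat R) ℤ}

lemma isZero_homology_of_isZero_homology_qCx (h : TermwiseRegular rs C) {i : ℤ}
    (hi : IsZero (((qCx R (Ideal.ofList rs)).obj C).homology i)) : IsZero (C.homology i) := by
  induction rs generalizing C with
  | nil =>
    rw [Ideal.ofList_nil] at hi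
    exact hi.of_iso (asIso (homologyMap (qRed R ⊥ C) i))
  | cons x xs ih =>
    have := h.finite
    have := finite_homology C i
    exact isZero_homology_of_isZero_homology_qCx_span h.isSMulRegular
      (h.mem_maximalIdeal x List.mem_cons_self)
      (ih h.qCx_span hi.qCx_cons)

lemma surjective_homologyMap_qRed (h : TermwiseRegular rs C) {i : ℤ}
    (hnext : IsZero (((qCx R (Ideal.ofList rs)).obj C).homology (i + 1))) :
    Function.Surjective (homologyMap (qRed R (Ideal.ofList rs) C) i) := by
  induction rs generalizing C with
  | nil =>
    rw [Ideal.ofList_nil]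
    exact (ModuleCat.epi_iff_surjective _).mp inferInstance
  | cons x xs ih =>
    have hC := isZero_homology_of_isZero_homology_qCx h hnext
    have hD := ih h.qCx_span hnext.qCx_cons
    rw [qRed_cons, homologyMap_comp, homologyMap_comp]
    exact (bijective_homologyMap_qCxConsIso_hom x xs C i).2.comp
      (hD.comp (surjective_homologyMap_qRed_span h.isSMulRegular hC))

lemma ker_homologyMap_qRed (h : TermwiseRegular rs C) {i : ℤ}
    (hnext : IsZero (((qCx R (Ideal.ofList rs)).obj C).homology (i + 1))) :
    LinearMap.ker (homologyMap (qRed R (Ideal.ofList rs) C) i).hom =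
      Ideal.ofList rs • (⊤ : Submodule R (C.homology i)) := by
  induction rs generalizing C with
  | nil =>
    rw [Ideal.ofList_nil, Submodule.bot_smul, LinearMap.ker_eq_bot]
    exact (ModuleCat.mono_iff_injective _).mp inferInstance
  | cons x xs ih =>
    have hC := isZero_homology_of_isZero_homology_qCx h hnext
    have hD := ih h.qCx_span hnext.qCx_cons
    have hφ : Submodule.map (homologyMap (qRed R (Ideal.span {x}) C) i).hom (Ideal.ofList xs • ⊤) =
        Ideal.ofList xs • ⊤ := by
      rw [Submodule.map_smul'', Submodule.map_top,
        LinearMap.range_eq_top.mpr (surjective_homologyMap_qRed_span h.isSMulRegular hC)]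
    rw [qRed_cons, homologyMap_comp, homologyMap_comp, ModuleCat.hom_comp, ModuleCat.hom_comp,
      LinearMap.ker_comp, LinearMap.ker_comp,
      LinearMap.ker_eq_bot.mpr (bijective_homologyMap_qCxConsIso_hom x xs C i).1,
      Submodule.comap_bot, hD, ← hφ, Submodule.comap_map_eq,
      ker_homologyMap_qRed_span h.isSMulRegular, Ideal.ofList_cons, Submodule.sup_smul, sup_comm]

lemma isWeaklyRegular_homology (h : TermwiseRegular rs C) {i : ℤ}
    (hprev : IsZero (((qCx R (Ideal.ofList rs)).obj C).homology (i - 1)))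
    (hnext : IsZero (((qCx R (Ideal.ofList rs)).obj C).homology (i + 1))) :
    IsWeaklyRegular (C.homology i) rs := by
  induction rs generalizing C with
  | nil => exact IsWeaklyRegular.nil R _
  | cons x xs ih =>
    have hx := h.isSMulRegular
    have hφ := surjective_homologyMap_qRed_span hx (isZero_homology_of_isZero_homology_qCx h hnext)
    have e : (C.homology i ⧸ (Ideal.span {x} • ⊤ : Submodule R (C.homology i))) ≃ₗ[R]
        ((qCx R (Ideal.span {x})).obj C).homology i :=
      (Submodule.quotEquivOfEq _ _ (ker_homologyMap_qRed_span hx i).symm).trans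
        (LinearMap.quotKerEquivOfSurjective _ hφ)
    refine (isWeaklyRegular_cons_iff_span x xs).mpr ⟨?_, ?_⟩
    · exact isSMulRegular_homology hx
        (isZero_homology_of_isZero_homology_qCx h.qCx_span hprev.qCx_cons)
    · exact (e.isWeaklyRegular_congr xs).mpr (ih h.qCx_span hprev.qCx_cons hnext.qCx_cons)

end Sequence

theorem statement_0_general (R : Type) [CommRing R] [IsNoetherianRing R] [IsLocalRing R]
    (b : ℤ) (C : CochainComplex (ModuleCat R) ℤ)
    (hfin : ∀ i : ℤ, Module.Finite R (C.X i))
    (hfree : ∀ i : ℤ, Module.Free R (C.X i))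
    (rs : List R) (hreg : RingTheory.Sequence.IsRegular R rs)
    (hvanish : ∀ i : ℤ, i ≠ b →
      Limits.IsZero (((qCx R (Ideal.ofList rs)).obj C).homology i)) :
    (∀ i : ℤ, i ≠ b → Limits.IsZero (C.homology i)) ∧
    (Function.Surjective
      ((HomologicalComplex.homologyFunctor (ModuleCat R) (ComplexShape.up ℤ) b).map
        (qRed R (Ideal.ofList rs) C)) ∧
      LinearMap.ker
        ((HomologicalComplex.homologyFunctor (ModuleCat R) (ComplexShape.up ℤ) b).map
          (qRed R (Ideal.ofList rs) C)).hom =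
        Ideal.ofList rs • (⊤ : Submodule R (C.homology b))) ∧
    (¬ Limits.IsZero (((qCx R (Ideal.ofList rs)).obj C).homology b) →
      RingTheory.Sequence.IsRegular (↑(C.homology b)) rs) := by
  have hC : TermwiseRegular rs C :=
    ⟨hfin, fun _ => hreg.toIsWeaklyRegular.of_flat_module, hreg.mem_maximalIdeal⟩
  have hnext := hvanish (b + 1) (by omega)
  have hsurj := surjective_homologyMap_qRed hC hnext
  refine ⟨fun i hi => isZero_homology_of_isZero_homology_qCx hC (hvanish i hi),
    ⟨hsurj, ker_homologyMap_qRed hC hnext⟩, fun hne => ?_⟩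
  have := finite_homology C b
  have : Nontrivial (C.homology b) := by
    rw [ModuleCat.isZero_iff_subsingleton, not_subsingleton_iff_nontrivial] at hne
    exact hsurj.nontrivial
  exact .of_isWeaklyRegular_of_mem_maximalIdeal _ hC.mem_maximalIdeal
    (isWeaklyRegular_homology hC (hvanish (b - 1) (by omega)) hnext)

theorem statement_0 (R : Type) [CommRing R] [IsNoetherianRing R] [IsLocalRing R]
    (a b : ℤ) (C : CochainComplex (ModuleCat R) ℤ)
    (hbound : ∀ i : ℤ, (i < a ∨ b < i) → Limits.IsZero (C.X i))
    (hfin : ∀ i : ℤ, Module.Finite R (C.X i))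
    (hfree : ∀ i : ℤ, Module.Free R (C.X i))
    (rs : List R) (hreg : RingTheory.Sequence.IsRegular R rs)
    (hvanish : ∀ i : ℤ, i ≠ b →
      Limits.IsZero (((qCx R (Ideal.ofList rs)).obj C).homology i)) :
    (∀ i : ℤ, i ≠ b → Limits.IsZero (C.homology i)) ∧
    (Function.Surjective
      ((HomologicalComplex.homologyFunctor (ModuleCat R) (ComplexShape.up ℤ) b).map
        (qRed R (Ideal.ofList rs) C)) ∧
      LinearMap.ker
        ((HomologicalComplex.homologyFunctor (ModuleCat R) (ComplexShape.up ℤ) b).map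
          (qRed R (Ideal.ofList rs) C)).hom =
        Ideal.ofList rs • (⊤ : Submodule R (C.homology b))) ∧
    (¬ Limits.IsZero (((qCx R (Ideal.ofList rs)).obj C).homology b) →
      RingTheory.Sequence.IsRegular (↑(C.homology b)) rs) :=
  statement_0_general R b C hfin hfree rs hreg hvanish
end

section
/- Let p be a prime, E a finite extension of ℚ_p with ring of integers 𝒪 and residue field k, and let R be a complete Noetherian local 𝒪-algebra with residue field k. Suppose given finite R-modules M', M, M'' with endomorphisms T' ∈ End_R(M'), T ∈ End_R(M), T'' ∈ End_R(M''), and a short exact sequence 0 → M' → M → M'' → 0 whose maps intertwine T', T, and T''. Then the induced sequences 0 → M'_ord → M_ord → M''_ord → 0 and 0 → M'_non-ord → M_non-ord → M''_non-ord → 0 are exact. -/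
/-!
`M_ord` and `M_non-ord` are determined by `T` alone: `M_ord` consists of the elements lying in the
image of every power of `T`, and `M_non-ord` of the elements that large powers of `T` push into
arbitrarily deep layers `𝔪_R ^ n • M`. Projecting onto the other summand, either description
reduces to Krull's intersection theorem (`M` is `𝔪_R`-adically separated), using that `T` is an
automorphism of `M_ord`. These intrinsic descriptions are preserved by `T`-equivariant maps, so
`f` and `g` respect both decompositions, and a short exact sequence whose maps respect the
summands of direct sum decompositions restricts to a short exact sequence on each summand.
-/

open IsLocalRing

/-- An ordinary decomposition of `M` with respect to `T`: a `T`-invariant direct sum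
decomposition `M = M_ord ⊕ M_non-ord` such that `T` is invertible on `M_ord` and
topologically nilpotent on `M_non-ord` for the `𝔪_R`-adic topology. -/
def IsOrdinaryDecomp {R : Type} [CommRing R] [IsLocalRing R] {M : Type} [AddCommGroup M]
    [Module R M] (T : Module.End R M) (Mo Mn : Submodule R M) : Prop :=
  IsCompl Mo Mn ∧
  Submodule.map T Mo ≤ Mo ∧ Submodule.map T Mn ≤ Mn ∧
  (∀ y ∈ Mo, ∃ x ∈ Mo, T x = y) ∧ (∀ x ∈ Mo, T x = 0 → x = 0) ∧
  (∀ n : ℕ, ∃ N : ℕ, Submodule.map (T ^ N) Mn ≤ (IsLocalRing.maximalIdeal R) ^ n • Mn)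

namespace Submodule

variable {R M N : Type*} [Ring R] [AddCommGroup M] [Module R M] [AddCommGroup N] [Module R N]
  {p q : Submodule R M}

theorem projectionOnto_comp_of_mapsTo (h : IsCompl p q)
    {T : Module.End R M} (hp : ∀ x ∈ p, T x ∈ p) (hq : ∀ x ∈ q, T x ∈ q) :
    p.projectionOnto q h ∘ₗ T = T.restrict hp ∘ₗ p.projectionOnto q h := by
  ext x
  obtain ⟨a, ha, b, hb, rfl⟩ := mem_sup.mp (h.sup_eq_top ▸ mem_top : x ∈ p ⊔ q)
  simp [projectionOnto_apply_of_mem_left h ha, projectionOnto_apply_of_mem_right h hb,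
    projectionOnto_apply_of_mem_left h (hp _ ha), projectionOnto_apply_of_mem_right h (hq _ hb)]

theorem projectionOnto_pow_apply_of_mapsTo (hpq : IsCompl p q) {T : Module.End R M}
    (hp : ∀ x ∈ p, T x ∈ p) (hq : ∀ x ∈ q, T x ∈ q) (N : ℕ) (x : M) :
    p.projectionOnto q hpq ((T ^ N) x) = (T.restrict hp ^ N) (p.projectionOnto q hpq x) :=
  LinearMap.congr_fun (Module.End.commute_pow_left_of_commute
    (projectionOnto_comp_of_mapsTo hpq hp hq).symm N).symm x

theorem le_map_of_isCompl {g : M →ₗ[R] N} (hg : Function.Surjective g)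
    {A B : Submodule R M} {A'' B'' : Submodule R N} (hAB : Codisjoint A B)
    (hAB'' : Disjoint A'' B'') (hA : A.map g ≤ A'') (hB : B.map g ≤ B'') :
    A'' ≤ A.map g := by
  intro y hy
  obtain ⟨x, rfl⟩ := hg y
  obtain ⟨a, ha, b, hb, rfl⟩ := mem_sup.mp (hAB.eq_top ▸ mem_top : x ∈ A ⊔ B)
  have hgb : g b = 0 := by
    refine disjoint_def.mp hAB'' _ ?_ (hB (mem_map_of_mem hb))
    simpa using A''.sub_mem hy (hA (mem_map_of_mem ha))
  exact ⟨a, ha, by simp [hgb]⟩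

theorem inf_range_le_map_of_isCompl {f : N →ₗ[R] M} (hf : Function.Injective f)
    {A' B' : Submodule R N} {A B : Submodule R M} (hAB' : Codisjoint A' B')
    (hAB : Disjoint A B) (hA : A'.map f ≤ A) (hB : B'.map f ≤ B) :
    A ⊓ LinearMap.range f ≤ A'.map f := by
  rintro _ ⟨hx, x, rfl⟩
  obtain ⟨a, ha, b, hb, rfl⟩ := mem_sup.mp (hAB'.eq_top ▸ mem_top : x ∈ A' ⊔ B')
  have hfb : f b = 0 := by
    refine disjoint_def.mp hAB _ ?_ (hB (mem_map_of_mem hb))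
    simpa using A.sub_mem hx (hA (mem_map_of_mem ha))
  exact ⟨a, ha, by simp [hf (hfb.trans f.map_zero.symm)]⟩

end Submodule

theorem Submodule.mem_smul_top_of_bijective {R M N : Type*} [CommRing R] [AddCommGroup M]
    [Module R M] [AddCommGroup N] [Module R N] {φ : M →ₗ[R] N} (hφ : Function.Bijective φ)
    {I : Ideal R} {x : M} (hx : φ x ∈ I • (⊤ : Submodule R N)) :
    x ∈ I • (⊤ : Submodule R M) := by
  let e := LinearEquiv.ofBijective φ hφ
  simpa [e] using Submodule.smul_top_le_comap_smul_top I e.symm.toLinearMap hx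

namespace IsOrdinaryDecomp

variable {R : Type} [CommRing R] [IsLocalRing R] {M : Type} [AddCommGroup M] [Module R M]
  {T : Module.End R M} {Mo Mn : Submodule R M}

theorem mapsTo_ord (h : IsOrdinaryDecomp T Mo Mn) : ∀ x ∈ Mo, T x ∈ Mo :=
  fun _ hx => h.2.1 (Submodule.mem_map_of_mem hx)

theorem mapsTo_nonord (h : IsOrdinaryDecomp T Mo Mn) : ∀ x ∈ Mn, T x ∈ Mn :=
  fun _ hx => h.2.2.1 (Submodule.mem_map_of_mem hx)

theorem bijective_pow_restrict_ord (h : IsOrdinaryDecomp T Mo Mn) (N : ℕ) :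
    Function.Bijective ⇑(T.restrict h.mapsTo_ord ^ N) := by
  rw [Module.End.coe_pow]
  refine Function.Bijective.iterate
    ⟨(injective_iff_map_eq_zero _).mpr fun x hx => ?_, fun y => ?_⟩ N
  · exact Subtype.ext (h.2.2.2.2.1 x x.2 (congrArg Subtype.val hx))
  · obtain ⟨x, hx, hxy⟩ := h.2.2.2.1 y y.2
    exact ⟨⟨x, hx⟩, Subtype.ext hxy⟩

theorem exists_pow_restrict_nonord_mem (h : IsOrdinaryDecomp T Mo Mn) (n : ℕ) :
    ∃ N : ℕ, ∀ z : Mn,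
      (T.restrict h.mapsTo_nonord ^ N) z ∈ maximalIdeal R ^ n • (⊤ : Submodule R Mn) := by
  obtain ⟨N, hN⟩ := h.2.2.2.2.2 n
  refine ⟨N, fun z => ?_⟩
  rw [Submodule.mem_smul_top_iff, Module.End.pow_restrict, LinearMap.coe_restrict_apply]
  exact hN (Submodule.mem_map_of_mem z.2)

theorem mem_range_pow_of_mem_ord (h : IsOrdinaryDecomp T Mo Mn) {x : M} (hx : x ∈ Mo) (N : ℕ) :
    x ∈ LinearMap.range (T ^ N) := by
  obtain ⟨z, hz⟩ := (h.bijective_pow_restrict_ord N).2 ⟨x, hx⟩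
  refine ⟨z, ?_⟩
  rw [Module.End.pow_restrict] at hz
  exact congrArg Subtype.val hz

theorem exists_pow_mem_of_mem_nonord (h : IsOrdinaryDecomp T Mo Mn) {x : M} (hx : x ∈ Mn)
    (n : ℕ) : ∃ N : ℕ, (T ^ N) x ∈ maximalIdeal R ^ n • (⊤ : Submodule R M) := by
  obtain ⟨N, hN⟩ := h.2.2.2.2.2 n
  exact ⟨N, Submodule.smul_mono le_rfl le_top (hN (Submodule.mem_map_of_mem hx))⟩

variable [IsNoetherianRing R] [Module.Finite R M]

theorem mem_ord_of_forall_mem_range_pow (h : IsOrdinaryDecomp T Mo Mn) {x : M}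
    (hx : ∀ N : ℕ, x ∈ LinearMap.range (T ^ N)) : x ∈ Mo := by
  rw [← Submodule.projectionOnto_apply_eq_zero_iff h.1.symm]
  refine IsHausdorff.haus' (I := maximalIdeal R) _ fun n => SModEq.zero.mpr ?_
  obtain ⟨N, hN⟩ := h.exists_pow_restrict_nonord_mem n
  obtain ⟨y, rfl⟩ := hx N
  rw [Submodule.projectionOnto_pow_apply_of_mapsTo h.1.symm h.mapsTo_nonord h.mapsTo_ord]
  exact hN _

theorem mem_nonord_of_forall_exists_pow_mem (h : IsOrdinaryDecomp T Mo Mn) {x : M}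
    (hx : ∀ n : ℕ, ∃ N : ℕ, (T ^ N) x ∈ maximalIdeal R ^ n • (⊤ : Submodule R M)) :
    x ∈ Mn := by
  rw [← Submodule.projectionOnto_apply_eq_zero_iff h.1]
  refine IsHausdorff.haus' (I := maximalIdeal R) _ fun n => SModEq.zero.mpr ?_
  obtain ⟨N, hN⟩ := hx n
  refine Submodule.mem_smul_top_of_bijective (h.bijective_pow_restrict_ord N) ?_
  rw [← Submodule.projectionOnto_pow_apply_of_mapsTo h.1 h.mapsTo_ord h.mapsTo_nonord]
  exact Submodule.smul_top_le_comap_smul_top _ _ hN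

end IsOrdinaryDecomp

section Functoriality

variable {R : Type} [CommRing R] [IsLocalRing R] [IsNoetherianRing R]
  {M N : Type} [AddCommGroup M] [Module R M] [AddCommGroup N] [Module R N] [Module.Finite R N]
  {S : Module.End R M} {T : Module.End R N} {Mo Mn : Submodule R M} {No Nn : Submodule R N}
  {f : M →ₗ[R] N}

theorem IsOrdinaryDecomp.map_ord_le (hM : IsOrdinaryDecomp S Mo Mn)
    (hN : IsOrdinaryDecomp T No Nn) (hf : f ∘ₗ S = T ∘ₗ f) : Mo.map f ≤ No := by
  rintro _ ⟨x, hx, rfl⟩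
  refine hN.mem_ord_of_forall_mem_range_pow fun k => ?_
  obtain ⟨y, rfl⟩ := hM.mem_range_pow_of_mem_ord hx k
  exact ⟨f y, LinearMap.congr_fun (Module.End.commute_pow_left_of_commute hf.symm k) y⟩

theorem IsOrdinaryDecomp.map_nonord_le (hM : IsOrdinaryDecomp S Mo Mn)
    (hN : IsOrdinaryDecomp T No Nn) (hf : f ∘ₗ S = T ∘ₗ f) : Mn.map f ≤ Nn := by
  rintro _ ⟨x, hx, rfl⟩
  refine hN.mem_nonord_of_forall_exists_pow_mem fun n => ?_
  obtain ⟨k, hk⟩ := hM.exists_pow_mem_of_mem_nonord hx n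
  refine ⟨k, ?_⟩
  rw [← LinearMap.comp_apply, Module.End.commute_pow_left_of_commute hf.symm k,
    LinearMap.comp_apply]
  exact Submodule.smul_top_le_comap_smul_top _ f hk

end Functoriality

theorem statement_12_general
    (R : Type) [CommRing R]
    [IsNoetherianRing R] [IsLocalRing R]
    (M' M M'' : Type) [AddCommGroup M'] [Module R M']
    [AddCommGroup M] [Module R M] [Module.Finite R M]
    [AddCommGroup M''] [Module R M''] [Module.Finite R M'']
    (T' : Module.End R M') (T : Module.End R M) (T'' : Module.End R M'')
    (f : M' →ₗ[R] M) (g : M →ₗ[R] M'')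
    (hinj : Function.Injective f) (hsurj : Function.Surjective g)
    (hexact : LinearMap.range f = LinearMap.ker g)
    (hf : f ∘ₗ T' = T ∘ₗ f) (hg : g ∘ₗ T = T'' ∘ₗ g)
    (M'o M'n : Submodule R M') (hM' : IsOrdinaryDecomp T' M'o M'n)
    (Mo Mn : Submodule R M) (hM : IsOrdinaryDecomp T Mo Mn)
    (M''o M''n : Submodule R M'') (hM'' : IsOrdinaryDecomp T'' M''o M''n) :
    -- exactness of `0 → M'_ord → M_ord → M''_ord → 0`
    (Submodule.map f M'o ≤ Mo ∧ Submodule.map g Mo ≤ M''o ∧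
      (∀ x ∈ M'o, f x = 0 → x = 0) ∧
      (∀ y ∈ M''o, ∃ x ∈ Mo, g x = y) ∧
      (∀ x ∈ Mo, g x = 0 → ∃ x' ∈ M'o, f x' = x)) ∧
    -- exactness of `0 → M'_non-ord → M_non-ord → M''_non-ord → 0`
    (Submodule.map f M'n ≤ Mn ∧ Submodule.map g Mn ≤ M''n ∧
      (∀ x ∈ M'n, f x = 0 → x = 0) ∧
      (∀ y ∈ M''n, ∃ x ∈ Mn, g x = y) ∧
      (∀ x ∈ Mn, g x = 0 → ∃ x' ∈ M'n, f x' = x)) := by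
  have hfo := hM'.map_ord_le hM hf
  have hfn := hM'.map_nonord_le hM hf
  have hgo := hM.map_ord_le hM'' hg
  have hgn := hM.map_nonord_le hM'' hg
  have hf_eq_zero (x : M') (hx : f x = 0) : x = 0 := hinj (hx.trans f.map_zero.symm)
  refine ⟨⟨hfo, hgo, fun x _ => hf_eq_zero x, fun y hy => ?_, fun x hx hgx => ?_⟩,
    ⟨hfn, hgn, fun x _ => hf_eq_zero x, fun y hy => ?_, fun x hx hgx => ?_⟩⟩
  · exact Submodule.le_map_of_isCompl hsurj hM.1.codisjoint hM''.1.disjoint hgo hgn hy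
  · exact Submodule.inf_range_le_map_of_isCompl hinj hM'.1.codisjoint hM.1.disjoint hfo hfn
      ⟨hx, hexact.ge hgx⟩
  · exact Submodule.le_map_of_isCompl hsurj hM.1.symm.codisjoint hM''.1.symm.disjoint hgn hgo hy
  · exact Submodule.inf_range_le_map_of_isCompl hinj hM'.1.symm.codisjoint hM.1.symm.disjoint
      hfn hfo ⟨hx, hexact.ge hgx⟩

theorem statement_12 (p : ℕ) [Fact p.Prime] (E : Type) [Field E] [Algebra ℚ_[p] E]
    [FiniteDimensional ℚ_[p] E] [Algebra ℤ_[p] E] [IsScalarTower ℤ_[p] ℚ_[p] E]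
    (R : Type) [CommRing R] [Algebra (integralClosure ℤ_[p] E) R]
    [IsNoetherianRing R] [IsLocalRing R] [IsAdicComplete (maximalIdeal R) R]
    (M' M M'' : Type) [AddCommGroup M'] [Module R M'] [Module.Finite R M']
    [AddCommGroup M] [Module R M] [Module.Finite R M]
    [AddCommGroup M''] [Module R M''] [Module.Finite R M'']
    (T' : Module.End R M') (T : Module.End R M) (T'' : Module.End R M'')
    (f : M' →ₗ[R] M) (g : M →ₗ[R] M'')
    (hinj : Function.Injective f) (hsurj : Function.Surjective g)
    (hexact : LinearMap.range f = LinearMap.ker g)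
    (hf : f ∘ₗ T' = T ∘ₗ f) (hg : g ∘ₗ T = T'' ∘ₗ g)
    (M'o M'n : Submodule R M') (hM' : IsOrdinaryDecomp T' M'o M'n)
    (Mo Mn : Submodule R M) (hM : IsOrdinaryDecomp T Mo Mn)
    (M''o M''n : Submodule R M'') (hM'' : IsOrdinaryDecomp T'' M''o M''n) :
    -- exactness of `0 → M'_ord → M_ord → M''_ord → 0`
    (Submodule.map f M'o ≤ Mo ∧ Submodule.map g Mo ≤ M''o ∧
      (∀ x ∈ M'o, f x = 0 → x = 0) ∧
      (∀ y ∈ M''o, ∃ x ∈ Mo, g x = y) ∧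
      (∀ x ∈ Mo, g x = 0 → ∃ x' ∈ M'o, f x' = x)) ∧
    -- exactness of `0 → M'_non-ord → M_non-ord → M''_non-ord → 0`
    (Submodule.map f M'n ≤ Mn ∧ Submodule.map g Mn ≤ M''n ∧
      (∀ x ∈ M'n, f x = 0 → x = 0) ∧
      (∀ y ∈ M''n, ∃ x ∈ Mn, g x = y) ∧
      (∀ x ∈ Mn, g x = 0 → ∃ x' ∈ M'n, f x' = x)) :=
  statement_12_general R M' M M'' T' T T'' f g hinj hsurj hexact hf hg M'o M'n hM' Mo Mn hM M''o
    M''n hM''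
end
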